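/- Let K≥2 be an integer, M=⌊K/2⌋, μ∈Δ_d, and H∈S^d. If ζ_1,…,ζ_K are i.i.d. with common distribution P_μ, then E[exp(Tr(H·ω[ζ^K]))] ≤ ( E[exp(Tr((H/M)·ω_{12}[ζ²]))] )^M, where ζ² = (ζ_1,ζ_2). -/

import Mathlib

/-!
Hoeffding's argument. Fix `M = ⌊K/2⌋` disjoint pairs of indices. Averaging the kernel over
the pairs moved by all permutations `σ` of the `K` indices recovers the U-statistic
`Tr(H·ω[ζ^K])`, so by convexity of `exp` its exponential is at most the average over `σ` of a
product of `M` factors, one per pair. The pairs being disjoint, these factors are independent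
under the i.i.d. law, and each has the law of the two-sample term; hence every such product
integrates to the `M`-th power of the two-sample expectation.
-/

open Matrix MeasureTheory Real

noncomputable section

/-- The discrete distribution `P_μ` on ℝ^d assigning mass `μ i` to the basis vector `e_i`. -/
def discDist {d : ℕ} (μ : Fin d → ℝ) : Measure (Fin d → ℝ) :=
  ∑ i, ENNReal.ofReal (μ i) • Measure.dirac (Pi.single i 1)

/-- `ω_{ij} = (1/2)(ζ_iζ_jᵀ + ζ_jζ_iᵀ)` for two vectors. -/
def omegaPair {d : ℕ} (a b : Fin d → ℝ) : Matrix (Fin d) (Fin d) ℝ :=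
  (1/2 : ℝ) • (vecMulVec a b + vecMulVec b a)

/-- The quadratic lifting `ω[ζ^K] = (2/(K(K−1)))·Σ_{i<j} ω_{ij}[ζ^K]`. -/
def omegaLift {d K : ℕ} (ζ : Fin K → Fin d → ℝ) : Matrix (Fin d) (Fin d) ℝ :=
  (2 / ((K : ℝ) * ((K : ℝ) - 1))) •
    ∑ p ∈ Finset.univ.filter (fun p : Fin K × Fin K => p.1 < p.2),
      omegaPair (ζ p.1) (ζ p.2)

/-- `Φ(H;Z) = ln(Σ_{i,j} Z_{ij} e^{H_{ij}})`. -/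
def PhiD {d : ℕ} (H Z : Matrix (Fin d) (Fin d) ℝ) : ℝ :=
  Real.log (∑ i, ∑ j, Z i j * Real.exp (H i j))

open ProbabilityTheory Finset

namespace Equiv.Perm

variable {ι : Type*} [DecidableEq ι]

theorem exists_apply_eq_and_apply_eq {u v u' v' : ι} (huv : u ≠ v) (huv' : u' ≠ v') :
    ∃ σ : Perm ι, σ u = u' ∧ σ v = v' := by
  refine ⟨swap (swap u u' v) v' * swap u u', ?_, by simp⟩
  have hne : swap u u' v ≠ u' := by
    intro h
    exact huv ((swap u u').injective ((swap_apply_left u u').trans h.symm))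
  simpa using swap_apply_of_ne_of_ne hne.symm huv'

variable [Fintype ι] {R : Type*} [AddCommMonoid R]

theorem sum_apply_pair_eq (F : ι → ι → R) {u v u' v' : ι} (huv : u ≠ v)
    (huv' : u' ≠ v') :
    ∑ σ : Perm ι, F (σ u) (σ v) = ∑ σ : Perm ι, F (σ u') (σ v') := by
  obtain ⟨ρ, hu, hv⟩ := exists_apply_eq_and_apply_eq huv' huv
  calc ∑ σ : Perm ι, F (σ u) (σ v) = ∑ σ : Perm ι, F ((σ * ρ) u') ((σ * ρ) v') := by
        simp [hu, hv]
    _ = _ := Fintype.sum_equiv (Equiv.mulRight ρ) _ _ fun _ => rfl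

theorem card_offDiag_nsmul_sum_apply_pair (F : ι → ι → R) {u v : ι} (huv : u ≠ v) :
    #(univ : Finset ι).offDiag • ∑ σ : Perm ι, F (σ u) (σ v) =
      (Fintype.card ι).factorial • ∑ p ∈ (univ : Finset ι).offDiag, F p.1 p.2 := by
  calc #(univ : Finset ι).offDiag • ∑ σ : Perm ι, F (σ u) (σ v)
      = ∑ p ∈ (univ : Finset ι).offDiag, ∑ σ : Perm ι, F (σ p.1) (σ p.2) := by
        rw [sum_congr rfl fun p hp => sum_apply_pair_eq F (mem_offDiag.1 hp).2.2 huv, sum_const]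
    _ = ∑ σ : Perm ι, ∑ p ∈ (univ : Finset ι).offDiag, F p.1 p.2 := by
        rw [sum_comm]
        refine sum_congr rfl fun σ _ => ?_
        exact sum_equiv (σ.prodCongr σ) (by simp) fun _ _ => rfl
    _ = _ := by rw [sum_const, card_univ, Fintype.card_perm]

end Equiv.Perm

theorem Finset.sum_offDiag_eq_two_nsmul_sum_lt {ι R : Type*} [Fintype ι] [LinearOrder ι]
    [AddCommMonoid R] (F : ι → ι → R) (hF : ∀ i j, F i j = F j i) :
    ∑ p ∈ (univ : Finset ι).offDiag, F p.1 p.2 =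
      2 • ∑ p ∈ univ.filter (fun p : ι × ι => p.1 < p.2), F p.1 p.2 := by
  have hsplit : (univ : Finset ι).offDiag =
      (univ.filter fun p : ι × ι => p.1 < p.2).disjUnion (univ.filter fun p => p.2 < p.1)
        (disjoint_filter.2 fun _ _ h => h.asymm) := by
    ext p
    simp [lt_or_lt_iff_ne]
  rw [hsplit, sum_disjUnion, two_nsmul]
  congr 1
  exact sum_equiv (Equiv.prodComm ι ι) (by simp) fun p _ => hF p.1 p.2

theorem Real.exp_average_le {α : Type*} [Fintype α] [Nonempty α] (x : α → ℝ) :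
    Real.exp ((Fintype.card α : ℝ)⁻¹ * ∑ a, x a) ≤
      (Fintype.card α : ℝ)⁻¹ * ∑ a, Real.exp (x a) := by
  have hcard : (0 : ℝ) < Fintype.card α := by exact_mod_cast Fintype.card_pos
  simpa [smul_eq_mul, mul_sum] using convexOn_exp.map_sum_le (t := univ)
    (w := fun _ => (Fintype.card α : ℝ)⁻¹) (p := x) (fun _ _ => by positivity)
    (by simp [hcard.ne']) fun _ _ => Set.mem_univ _

section UStatistic

variable {X ι : Type*} [Fintype ι] [LinearOrder ι]

def uStatistic (f : X → X → ℝ) (ζ : ι → X) : ℝ :=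
  2 / (Fintype.card ι * (Fintype.card ι - 1)) *
    ∑ p ∈ univ.filter (fun p : ι × ι => p.1 < p.2), f (ζ p.1) (ζ p.2)

theorem average_perm_apply_pair_eq_uStatistic {f : X → X → ℝ} (hf : ∀ x y, f x y = f y x)
    {u v : ι} (huv : u ≠ v) (ζ : ι → X) :
    ((Fintype.card ι).factorial : ℝ)⁻¹ * ∑ σ : Equiv.Perm ι, f (ζ (σ u)) (ζ (σ v)) =
      uStatistic f ζ := by
  have h := Equiv.Perm.card_offDiag_nsmul_sum_apply_pair (fun i j => f (ζ i) (ζ j)) huv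
  rw [sum_offDiag_eq_two_nsmul_sum_lt (fun i j => f (ζ i) (ζ j)) fun i j => hf _ _,
    offDiag_card, card_univ] at h
  have hK : (2 : ℝ) ≤ Fintype.card ι := by
    exact_mod_cast Fintype.one_lt_card_iff.2 ⟨u, v, huv⟩
  have hcast : ((Fintype.card ι * Fintype.card ι - Fintype.card ι : ℕ) : ℝ) =
      Fintype.card ι * (Fintype.card ι - 1) := by
    push_cast [Nat.le_mul_self]
    ring
  rw [nsmul_eq_mul, nsmul_eq_mul, nsmul_eq_mul, hcast] at h
  have hfac : (0 : ℝ) < (Fintype.card ι).factorial := by positivity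
  have hKK : (0 : ℝ) < Fintype.card ι * (Fintype.card ι - 1) := by nlinarith
  rw [uStatistic, inv_mul_eq_div, div_mul_eq_mul_div, div_eq_div_iff hfac.ne' hKK.ne']
  push_cast at h
  linarith

end UStatistic

section Pairing

variable {X ι ι' : Type*} {M : ℕ}

def pairsAlong (e : (Fin M ⊕ Fin M) ⊕ ι' ≃ ι) (ζ : ι → X) : Fin M → X × X :=
  fun m => (ζ (e (.inl (.inl m))), ζ (e (.inl (.inr m))))

variable [MeasurableSpace X] (ν : Measure X) [IsProbabilityMeasure ν] [Fintype ι] [Fintype ι']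

theorem measurePreserving_pairsAlong (e : (Fin M ⊕ Fin M) ⊕ ι' ≃ ι) :
    MeasurePreserving (pairsAlong e) (Measure.pi fun _ : ι => ν)
      (Measure.pi fun _ : Fin M => ν.prod ν) := by
  have h1 := (measurePreserving_piCongrLeft (fun _ : ι => ν) e).symm
  have h2 := measurePreserving_sumPiEquivProdPi (fun _ : (Fin M ⊕ Fin M) ⊕ ι' => ν)
  have h3 := measurePreserving_fst (μ := Measure.pi fun _ : Fin M ⊕ Fin M => ν)
    (ν := Measure.pi fun _ : ι' => ν)
  have h4 := measurePreserving_sumPiEquivProdPi (fun _ : Fin M ⊕ Fin M => ν)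
  have h5 := (measurePreserving_arrowProdEquivProdArrow X X (Fin M) (fun _ => ν) fun _ => ν).symm
  exact h5.comp (h4.comp (h3.comp (h2.comp h1)))

theorem lintegral_prod_pairsAlong (e : (Fin M ⊕ Fin M) ⊕ ι' ≃ ι) {g : X × X → ENNReal}
    (hg : Measurable g) :
    ∫⁻ ζ, ∏ m, g (pairsAlong e ζ m) ∂(Measure.pi fun _ : ι => ν) =
      (∫⁻ z, g z ∂(ν.prod ν)) ^ M := by
  rw [(measurePreserving_pairsAlong ν e).lintegral_comp (f := fun y => ∏ m, g (y m))
    (by fun_prop)]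
  have hindep : iIndepFun (fun m (y : Fin M → X × X) => g (y m))
      (Measure.pi fun _ => ν.prod ν) :=
    iIndepFun_pi fun _ => hg.aemeasurable
  rw [lintegral_prod_eq_prod_lintegral_of_indepFun univ _ hindep fun m => by fun_prop]
  simp [(measurePreserving_eval (fun _ => ν.prod ν) _).lintegral_comp hg]

end Pairing

section Hoeffding

variable {X ι ι' : Type*} [Fintype ι] [LinearOrder ι] {M : ℕ} {f : X → X → ℝ}

theorem uStatistic_eq_average_perm (hf : ∀ x y, f x y = f y x)
    (e : (Fin M ⊕ Fin M) ⊕ ι' ≃ ι) (hM : M ≠ 0) (ζ : ι → X) :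
    uStatistic f ζ = (Fintype.card (Equiv.Perm ι) : ℝ)⁻¹ *
      ∑ σ : Equiv.Perm ι, ∑ m,
        f (pairsAlong (e.trans σ) ζ m).1 (pairsAlong (e.trans σ) ζ m).2 / M := by
  calc uStatistic f ζ = ∑ _m : Fin M, uStatistic f ζ / M := by
        rw [sum_const, card_univ, Fintype.card_fin, nsmul_eq_mul]
        field_simp
    _ = ∑ m : Fin M, ((Fintype.card ι).factorial : ℝ)⁻¹ *
          (∑ σ : Equiv.Perm ι, f (ζ (σ (e (.inl (.inl m))))) (ζ (σ (e (.inl (.inr m)))))) /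
            M := by
        refine sum_congr rfl fun m _ => ?_
        rw [average_perm_apply_pair_eq_uStatistic hf (e.injective.ne (by simp))]
    _ = _ := by
        simp_rw [Fintype.card_perm, mul_sum, sum_div, mul_div_assoc]
        exact sum_comm

theorem exp_uStatistic_le (hf : ∀ x y, f x y = f y x)
    (e : (Fin M ⊕ Fin M) ⊕ ι' ≃ ι) (hM : M ≠ 0) (ζ : ι → X) :
    Real.exp (uStatistic f ζ) ≤ (Fintype.card (Equiv.Perm ι) : ℝ)⁻¹ *
      ∑ σ : Equiv.Perm ι, ∏ m,
        Real.exp (f (pairsAlong (e.trans σ) ζ m).1 (pairsAlong (e.trans σ) ζ m).2 / M) := by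
  rw [uStatistic_eq_average_perm hf e hM]
  refine (Real.exp_average_le _).trans_eq ?_
  simp only [Real.exp_sum]

theorem lintegral_exp_uStatistic_le [MeasurableSpace X] (ν : Measure X) [IsProbabilityMeasure ν]
    (hf : ∀ x y, f x y = f y x) (hf_meas : Measurable fun z : X × X => f z.1 z.2)
    (hM : M ≠ 0) (hMK : 2 * M ≤ Fintype.card ι) :
    ∫⁻ ζ, ENNReal.ofReal (Real.exp (uStatistic f ζ)) ∂(Measure.pi fun _ : ι => ν) ≤
      (∫⁻ z, ENNReal.ofReal (Real.exp (f z.1 z.2 / M)) ∂(ν.prod ν)) ^ M := by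
  let e : (Fin M ⊕ Fin M) ⊕ Fin (Fintype.card ι - 2 * M) ≃ ι :=
    (finSumFinEquiv.sumCongr (Equiv.refl _)).trans
      (finSumFinEquiv.trans ((finCongr (by omega)).trans (Fintype.equivFin ι).symm))
  set g : X × X → ENNReal := fun z => ENNReal.ofReal (Real.exp (f z.1 z.2 / M))
  have hg : Measurable g := by fun_prop
  have hpairs (σ : Equiv.Perm ι) (m : Fin M) :
      Measurable fun ζ : ι → X => g (pairsAlong (e.trans σ) ζ m) :=
    hg.comp ((measurable_pi_apply m).comp (measurePreserving_pairsAlong ν (e.trans σ)).measurable)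
  have hfac : (Fintype.card (Equiv.Perm ι) : ENNReal) ≠ 0 := by simp
  calc ∫⁻ ζ, ENNReal.ofReal (Real.exp (uStatistic f ζ)) ∂(Measure.pi fun _ : ι => ν)
      ≤ ∫⁻ ζ, (Fintype.card (Equiv.Perm ι) : ENNReal)⁻¹ *
          ∑ σ : Equiv.Perm ι, ∏ m, g (pairsAlong (e.trans σ) ζ m)
            ∂(Measure.pi fun _ : ι => ν) := by
        refine lintegral_mono fun ζ =>
          (ENNReal.ofReal_le_ofReal (exp_uStatistic_le hf e hM ζ)).trans_eq ?_
        rw [ENNReal.ofReal_mul (by positivity), ENNReal.ofReal_inv_of_pos (by positivity),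
          ENNReal.ofReal_natCast, ENNReal.ofReal_sum_of_nonneg fun _ _ => by positivity]
        simp_rw [ENNReal.ofReal_prod_of_nonneg fun _ _ => (Real.exp_pos _).le, g]
    _ = (Fintype.card (Equiv.Perm ι) : ENNReal)⁻¹ *
          ∑ _σ : Equiv.Perm ι, (∫⁻ z, g z ∂(ν.prod ν)) ^ M := by
        rw [lintegral_const_mul' _ _ (by simp), lintegral_finsetSum _ fun σ _ =>
          Finset.measurable_prod _ fun m _ => hpairs σ m]
        simp_rw [lintegral_prod_pairsAlong ν _ hg]
    _ = (∫⁻ z, g z ∂(ν.prod ν)) ^ M := by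
        rw [sum_const, card_univ, nsmul_eq_mul, ← mul_assoc,
          ENNReal.inv_mul_cancel hfac (ENNReal.natCast_ne_top _), one_mul]

end Hoeffding

theorem isProbabilityMeasure_discDist {d : ℕ} {μ : Fin d → ℝ} (hμ0 : ∀ i, 0 ≤ μ i)
    (hμ1 : ∑ i, μ i = 1) : IsProbabilityMeasure (discDist μ) := by
  constructor
  simp [discDist, Measure.finsetSum_apply, ← ENNReal.ofReal_sum_of_nonneg fun i _ => hμ0 i, hμ1]

theorem omegaPair_comm {d : ℕ} (a b : Fin d → ℝ) : omegaPair a b = omegaPair b a := by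
  rw [omegaPair, omegaPair, add_comm]

theorem trace_mul_omegaLift {d K : ℕ} (H : Matrix (Fin d) (Fin d) ℝ)
    (ζ : Fin K → Fin d → ℝ) :
    (H * omegaLift ζ).trace = uStatistic (fun a b => (H * omegaPair a b).trace) ζ := by
  rw [omegaLift, Matrix.mul_smul, Matrix.trace_smul, Matrix.mul_sum, Matrix.trace_sum,
    smul_eq_mul, uStatistic, Fintype.card_fin]

theorem continuous_trace_mul_omegaPair {d : ℕ} (H : Matrix (Fin d) (Fin d) ℝ) :
    Continuous fun z : (Fin d → ℝ) × (Fin d → ℝ) => (H * omegaPair z.1 z.2).trace := by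
  unfold omegaPair
  fun_prop

theorem statement10_general {d K : ℕ} (hK : 2 ≤ K) (μ : Fin d → ℝ)
    (hμ0 : ∀ i, 0 ≤ μ i) (hμ1 : ∑ i, μ i = 1)
    (H : Matrix (Fin d) (Fin d) ℝ) :
    ∫⁻ ζ, ENNReal.ofReal (Real.exp ((H * omegaLift ζ).trace))
        ∂(Measure.pi fun _ : Fin K => discDist μ)
      ≤ (∫⁻ p, ENNReal.ofReal (Real.exp
            ((((((K / 2 : ℕ) : ℝ))⁻¹ • H) * omegaPair p.1 p.2).trace))
          ∂((discDist μ).prod (discDist μ))) ^ (K / 2) := by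
  have := isProbabilityMeasure_discDist hμ0 hμ1
  simp_rw [trace_mul_omegaLift, Matrix.smul_mul, Matrix.trace_smul, smul_eq_mul, inv_mul_eq_div]
  exact lintegral_exp_uStatistic_le (discDist μ) (fun a b => by rw [omegaPair_comm])
    (continuous_trace_mul_omegaPair H).measurable (by omega) (by simp; omega)

/-- for i.i.d. `ζ_1,…,ζ_K ∼ P_μ` and symmetric `H`,
`E[exp(Tr(H·ω[ζ^K]))] ≤ (E[exp(Tr((H/M)·ω_{12}[ζ²]))])^M` with `M = ⌊K/2⌋`. -/
theorem statement10 {d K : ℕ} (hK : 2 ≤ K) (μ : Fin d → ℝ)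
    (hμ0 : ∀ i, 0 ≤ μ i) (hμ1 : ∑ i, μ i = 1)
    (H : Matrix (Fin d) (Fin d) ℝ) (hHsym : H.IsSymm) :
    ∫⁻ ζ, ENNReal.ofReal (Real.exp ((H * omegaLift ζ).trace))
        ∂(Measure.pi fun _ : Fin K => discDist μ)
      ≤ (∫⁻ p, ENNReal.ofReal (Real.exp
            ((((((K / 2 : ℕ) : ℝ))⁻¹ • H) * omegaPair p.1 p.2).trace))
          ∂((discDist μ).prod (discDist μ))) ^ (K / 2) :=
  statement10_general hK μ hμ0 hμ1 H

end
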